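/- Let G be a connected graph, and suppose a parameter field w: V → ℝ^p achieves local error Err_local = (1/n) Σ_v ℓ_v(w(v)) ≤ ε with variation energy E_var = Σ_{(u,v)∈E}‖w(u)−w(v)‖², where each ℓ_v is L_w-Lipschitz and nonnegative. Then the constant field at the mean w̄ achieves average error at most ε + L_w·sqrt(E_var/(n·λ₂)). In particular, if the best constant-field average error exceeds ε + δ for some δ > 0, then every field achieving average local error ≤ ε has variation energy at least n·λ₂·δ²/L_w². -/

import Mathlib

/-!
Averaging the Lipschitz bound `ℓ_v(w̄) ≤ ℓ_v(w v) + L_w ‖w v - w̄‖` over `v` reduces the first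
claim to bounding the mean displacement `n⁻¹ Σ_v ‖w v - w̄‖`. By Cauchy–Schwarz it is at most
`√(n⁻¹ Σ_v ‖w v - w̄‖²)`, and the centred field `w - w̄` has mean-zero coordinates, so the
Rayleigh-quotient definition of `λ₂`, applied coordinatewise, gives
`λ₂ Σ_v ‖w v - w̄‖² ≤ E_var`. The second claim is the first one tested at `c = w̄`.
-/

open Finset

variable {V : Type*}

/-- Scalar Dirichlet energy, each undirected edge counted once. -/
noncomputable def dEnergy [Fintype V] (G : SimpleGraph V) [DecidableRel G.Adj] (f : V → ℝ) : ℝ :=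
  (∑ u : V, ∑ v : V, if G.Adj u v then (f u - f v) ^ 2 else 0) / 2

/-- Algebraic connectivity `λ₂` of `G` via the Rayleigh quotient over nonzero mean-zero
fields (the second-smallest Laplacian eigenvalue for connected graphs). -/
noncomputable def lam2 [Fintype V] (G : SimpleGraph V) [DecidableRel G.Adj] : ℝ :=
  sInf { r : ℝ | ∃ f : V → ℝ, f ≠ 0 ∧ (∑ v : V, f v) = 0 ∧
    r = dEnergy G f / (∑ v : V, (f v) ^ 2) }

/-- Vector-valued Dirichlet (variation) energy `Σ_{(u,v)∈E} ‖w u - w v‖²`. -/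
noncomputable def vEnergy [Fintype V] (G : SimpleGraph V) [DecidableRel G.Adj] {p : ℕ}
    (w : V → EuclideanSpace ℝ (Fin p)) : ℝ :=
  (∑ u : V, ∑ v : V, if G.Adj u v then ‖w u - w v‖ ^ 2 else 0) / 2

lemma sum_sub_mean_eq_zero [Fintype V] {E : Type*} [AddCommGroup E] [Module ℝ E] (w : V → E) :
    ∑ v, (w v - (Fintype.card V : ℝ)⁻¹ • ∑ u, w u) = 0 := by
  cases isEmpty_or_nonempty V
  · simp
  rw [sum_sub_distrib, sum_const, card_univ, ← Nat.cast_smul_eq_nsmul ℝ, smul_smul,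
    mul_inv_cancel₀ (by positivity), one_smul, sub_self]

lemma sum_le_sum_add_mul_sum_norm_sub {ι E : Type*} [SeminormedAddCommGroup E] (s : Finset ι)
    {ℓ : ι → E → ℝ} {L : ℝ} (hℓ : ∀ i a b, |ℓ i a - ℓ i b| ≤ L * ‖a - b‖) (w : ι → E) (c : E) :
    ∑ i ∈ s, ℓ i c ≤ ∑ i ∈ s, ℓ i (w i) + L * ∑ i ∈ s, ‖w i - c‖ := by
  rw [mul_sum, ← sum_add_distrib]
  refine sum_le_sum fun i _ => ?_
  have := (abs_le.mp (hℓ i c (w i))).2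
  rw [norm_sub_rev] at this
  linarith

lemma mul_sq_div_sq_le_of_lt_mul_sqrt_div {a E δ L : ℝ} (hδ : 0 < δ) (hL : 0 < L) (hE : 0 ≤ E)
    (h : δ < L * √(E / a)) : a * δ ^ 2 / L ^ 2 ≤ E := by
  have hsq : (δ / L) ^ 2 < E / a :=
    (Real.lt_sqrt (div_pos hδ hL).le).mp (by rwa [div_lt_iff₀' hL])
  have ha : 0 < a := by
    by_contra! ha
    have : E / a ≤ 0 := div_nonpos_iff.mpr (Or.inl ⟨hE, ha⟩)
    nlinarith [sq_nonneg (δ / L)]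
  calc a * δ ^ 2 / L ^ 2 = a * (δ / L) ^ 2 := by ring
    _ ≤ a * (E / a) := by gcongr
    _ = E := mul_div_cancel₀ E ha.ne'

section Energy

variable [Fintype V] (G : SimpleGraph V) [DecidableRel G.Adj] {p : ℕ}

lemma dEnergy_nonneg (f : V → ℝ) : 0 ≤ dEnergy G f := by
  unfold dEnergy
  positivity

lemma vEnergy_nonneg (w : V → EuclideanSpace ℝ (Fin p)) : 0 ≤ vEnergy G w := by
  unfold vEnergy
  positivity

lemma lam2_mul_sum_sq_le_dEnergy {f : V → ℝ} (hf : ∑ v, f v = 0) :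
    lam2 G * ∑ v, f v ^ 2 ≤ dEnergy G f := by
  rcases eq_or_ne f 0 with rfl | hf0
  · simp [dEnergy]
  have hsum_pos : 0 < ∑ v, f v ^ 2 := by
    obtain ⟨v, hv⟩ := Function.ne_iff.mp hf0
    exact sum_pos' (fun v _ => sq_nonneg (f v)) ⟨v, mem_univ v, pow_two_pos_of_ne_zero hv⟩
  have hbdd : BddBelow { r : ℝ | ∃ f : V → ℝ, f ≠ 0 ∧ (∑ v : V, f v) = 0 ∧
      r = dEnergy G f / (∑ v : V, (f v) ^ 2) } := by
    refine ⟨0, ?_⟩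
    rintro r ⟨g, -, -, rfl⟩
    exact div_nonneg (dEnergy_nonneg G g) (sum_nonneg fun v _ => sq_nonneg (g v))
  rw [← le_div_iff₀ hsum_pos]
  exact csInf_le hbdd ⟨f, hf0, hf, rfl⟩

lemma vEnergy_eq_sum_dEnergy (w : V → EuclideanSpace ℝ (Fin p)) :
    vEnergy G w = ∑ i, dEnergy G (fun v => w v i) := by
  unfold vEnergy dEnergy
  rw [← sum_div]
  congr 1
  refine (sum_congr rfl fun u _ => ?_).trans sum_comm
  refine (sum_congr rfl fun v _ => ?_).trans sum_comm
  split_ifs <;> simp [EuclideanSpace.norm_sq_eq]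

lemma vEnergy_sub_const (w : V → EuclideanSpace ℝ (Fin p)) (c : EuclideanSpace ℝ (Fin p)) :
    vEnergy G (fun v => w v - c) = vEnergy G w := by
  simp only [vEnergy, sub_sub_sub_cancel_right]

lemma lam2_mul_sum_norm_sq_le_vEnergy {w : V → EuclideanSpace ℝ (Fin p)}
    (hw : ∑ v, w v = 0) : lam2 G * ∑ v, ‖w v‖ ^ 2 ≤ vEnergy G w := by
  have hcoord (i : Fin p) : ∑ v, w v i = 0 := by simpa using congrArg (· i) hw
  calc lam2 G * ∑ v, ‖w v‖ ^ 2 = ∑ i, lam2 G * ∑ v, w v i ^ 2 := by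
        simp only [EuclideanSpace.norm_sq_eq, Real.norm_eq_abs, sq_abs, mul_sum]
        exact sum_comm
    _ ≤ ∑ i, dEnergy G (fun v => w v i) :=
        sum_le_sum fun i _ => lam2_mul_sum_sq_le_dEnergy G (hcoord i)
    _ = vEnergy G w := (vEnergy_eq_sum_dEnergy G w).symm

lemma lam2_mul_sum_norm_sub_mean_sq_le_vEnergy (w : V → EuclideanSpace ℝ (Fin p)) :
    lam2 G * ∑ v, ‖w v - (Fintype.card V : ℝ)⁻¹ • ∑ u, w u‖ ^ 2 ≤ vEnergy G w := by
  simpa only [vEnergy_sub_const] using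
    lam2_mul_sum_norm_sq_le_vEnergy G (sum_sub_mean_eq_zero w)

lemma inv_card_mul_sum_norm_sub_mean_le (hpos : 0 < lam2 G) (w : V → EuclideanSpace ℝ (Fin p)) :
    (Fintype.card V : ℝ)⁻¹ * ∑ v, ‖w v - (Fintype.card V : ℝ)⁻¹ • ∑ u, w u‖
      ≤ √(vEnergy G w / (Fintype.card V * lam2 G)) := by
  set n : ℝ := (Fintype.card V : ℝ)
  set d : V → ℝ := fun v => ‖w v - n⁻¹ • ∑ u, w u‖
  have hcs : (∑ v, d v) ^ 2 ≤ n * ∑ v, d v ^ 2 := by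
    simpa only [card_univ] using sq_sum_le_card_mul_sum_sq (s := univ) (f := d)
  have hpoinc : ∑ v, d v ^ 2 ≤ vEnergy G w / lam2 G := by
    rw [le_div_iff₀ hpos, mul_comm]
    exact lam2_mul_sum_norm_sub_mean_sq_le_vEnergy G w
  refine Real.le_sqrt_of_sq_le ?_
  calc (n⁻¹ * ∑ v, d v) ^ 2 = n⁻¹ ^ 2 * (∑ v, d v) ^ 2 := mul_pow _ _ _
    _ ≤ n⁻¹ ^ 2 * (n * ∑ v, d v ^ 2) := by gcongr
    _ = n⁻¹ * ∑ v, d v ^ 2 := by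
        rcases eq_or_ne n 0 with hn | hn
        · simp [hn]
        · field_simp
    _ ≤ n⁻¹ * (vEnergy G w / lam2 G) := by gcongr
    _ = vEnergy G w / (n * lam2 G) := by ring

end Energy

theorem obstruction_lower_bound_general [Fintype V] (G : SimpleGraph V) [DecidableRel G.Adj]
    (hpos : 0 < lam2 G)
    {p : ℕ} (ℓ : V → EuclideanSpace ℝ (Fin p) → ℝ) (Lw : ℝ) (hLw : 0 < Lw)
    (hlip : ∀ v (a b : EuclideanSpace ℝ (Fin p)), |ℓ v a - ℓ v b| ≤ Lw * ‖a - b‖)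
    (w : V → EuclideanSpace ℝ (Fin p)) (ε : ℝ)
    (herr : ((Fintype.card V : ℝ))⁻¹ * (∑ v : V, ℓ v (w v)) ≤ ε) :
    (((Fintype.card V : ℝ))⁻¹ * (∑ v : V, ℓ v ((Fintype.card V : ℝ)⁻¹ • ∑ u : V, w u))
        ≤ ε + Lw * Real.sqrt ((vEnergy G w) / ((Fintype.card V : ℝ) * lam2 G))) ∧
    (∀ δ : ℝ, 0 < δ →
      (∀ c : EuclideanSpace ℝ (Fin p),
        ε + δ < ((Fintype.card V : ℝ))⁻¹ * (∑ v : V, ℓ v c)) →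
      (Fintype.card V : ℝ) * lam2 G * δ ^ 2 / Lw ^ 2 ≤ vEnergy G w) := by
  set n : ℝ := (Fintype.card V : ℝ)
  set wbar := n⁻¹ • ∑ u, w u
  have hconst : n⁻¹ * ∑ v, ℓ v wbar ≤ ε + Lw * √(vEnergy G w / (n * lam2 G)) :=
    calc n⁻¹ * ∑ v, ℓ v wbar
        ≤ n⁻¹ * ∑ v, ℓ v (w v) + Lw * (n⁻¹ * ∑ v, ‖w v - wbar‖) := by
          have hn : 0 ≤ n⁻¹ := by positivity
          linarith [mul_le_mul_of_nonneg_left (sum_le_sum_add_mul_sum_norm_sub univ hlip w wbar) hn]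
      _ ≤ ε + Lw * √(vEnergy G w / (n * lam2 G)) := by
          gcongr
          exact inv_card_mul_sum_norm_sub_mean_le G hpos w
  refine ⟨hconst, fun δ hδ hall => ?_⟩
  exact mul_sq_div_sq_le_of_lt_mul_sqrt_div hδ hLw (vEnergy_nonneg G w) (by linarith [hall wbar])

/-- If a parameter field `w` achieves average local error `≤ ε` with variation energy
`E_var`, then the constant field at the mean achieves average error at most
`ε + Lw·sqrt(E_var/(n·λ₂))`;  consequently, if every constant field has average error
exceeding `ε + δ`, every such field has variation energy at least `n·λ₂·δ²/Lw²`. -/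
theorem obstruction_lower_bound [Fintype V] (G : SimpleGraph V) [DecidableRel G.Adj]
    (hconn : G.Connected) (hpos : 0 < lam2 G)
    {p : ℕ} (ℓ : V → EuclideanSpace ℝ (Fin p) → ℝ) (Lw : ℝ) (hLw : 0 < Lw)
    (hnonneg : ∀ v x, 0 ≤ ℓ v x)
    (hlip : ∀ v (a b : EuclideanSpace ℝ (Fin p)), |ℓ v a - ℓ v b| ≤ Lw * ‖a - b‖)
    (w : V → EuclideanSpace ℝ (Fin p)) (ε : ℝ)
    (herr : ((Fintype.card V : ℝ))⁻¹ * (∑ v : V, ℓ v (w v)) ≤ ε) :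
    (((Fintype.card V : ℝ))⁻¹ * (∑ v : V, ℓ v ((Fintype.card V : ℝ)⁻¹ • ∑ u : V, w u))
        ≤ ε + Lw * Real.sqrt ((vEnergy G w) / ((Fintype.card V : ℝ) * lam2 G))) ∧
    (∀ δ : ℝ, 0 < δ →
      (∀ c : EuclideanSpace ℝ (Fin p),
        ε + δ < ((Fintype.card V : ℝ))⁻¹ * (∑ v : V, ℓ v c)) →
      (Fintype.card V : ℝ) * lam2 G * δ ^ 2 / Lw ^ 2 ≤ vEnergy G w) :=
  obstruction_lower_bound_general G hpos ℓ Lw hLw hlip w ε herr
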